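/- For every natural number n ≥ 1, one has S(n) = F(n), i.e. ∑_{x₁=1}^n ∑_{x₂=1}^n ∑_{x₃=1}^n ((x₁+x₂+x₃)² + 3(x₁−x₂−x₃)|x₁−x₂−x₃|)/(x₁x₂x₃) = (33/2 − 3B(n))n² − (21/2 + 3B(n))n + 6A(n). -/

import Mathlib

/-!
Since `t |t| = 2 max(t, 0)² - t²`, the summand splits into
`((x₁ + x₂ + x₃)² - 3 (x₁ - x₂ - x₃)²) / (x₁ x₂ x₃)`, whose cube sum factors into products of
`∑ x`, `∑ 1` and `∑ 1/x`, plus `6 max(x₁ - x₂ - x₃, 0)² / (x₁ x₂ x₃)`, which lives on the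
triangle `x₂ + x₃ ≤ x₁`. For fixed `x₁ = m` the triangle sums
`T_j(m) = ∑_{b + c ≤ m} (m - b - c)^j / (b c)` obey `T_j(m + 1) = ∑_i (j choose i) T_i(m)`,
plus for `j = 0` the anti-diagonal `∑_{b + c = m + 1} 1 / (b c) = 2 A(m) / (m + 1)`.
Induction gives `T_0, T_1, T_2` in terms of `A` and `B`, and one more induction sums `T_2(m) / m`.
-/

open Real

noncomputable def A (n : ℕ) : ℝ := ∑ j ∈ Finset.Icc 1 n, (1 : ℝ) / j

noncomputable def B (n : ℕ) : ℝ := ∑ j ∈ Finset.Icc 1 n, (1 : ℝ) / j ^ 2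

noncomputable def F (n : ℕ) : ℝ :=
  (33 / 2 - 3 * B n) * n ^ 2 - (21 / 2 + 3 * B n) * n + 6 * A n

noncomputable def S (n : ℕ) : ℝ :=
  ∑ x₁ ∈ Finset.Icc 1 n, ∑ x₂ ∈ Finset.Icc 1 n, ∑ x₃ ∈ Finset.Icc 1 n,
    (((x₁ : ℝ) + x₂ + x₃) ^ 2 + 3 * ((x₁ : ℝ) - x₂ - x₃) * |(x₁ : ℝ) - x₂ - x₃|) /
      ((x₁ : ℝ) * x₂ * x₃)

open Finset

lemma A_succ (n : ℕ) : A (n + 1) = A n + 1 / ((n : ℝ) + 1) := by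
  rw [A, A, sum_Icc_succ_top (by omega)]
  push_cast; ring

lemma B_succ (n : ℕ) : B (n + 1) = B n + 1 / ((n : ℝ) + 1) ^ 2 := by
  rw [B, B, sum_Icc_succ_top (by omega)]
  push_cast; ring

lemma sum_Icc_one_natCast (n : ℕ) : ∑ k ∈ Icc 1 n, (k : ℝ) = n * (n + 1) / 2 := by
  induction n with
  | zero => simp
  | succ n ih => rw [sum_Icc_succ_top (by omega), ih]; push_cast; ring

lemma sum_Icc_one_inv_reflect (m : ℕ) :
    ∑ b ∈ Icc 1 m, (1 : ℝ) / ((m + 1 - b : ℕ) : ℝ) = A m := by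
  rw [A]
  refine sum_nbij' (fun b => m + 1 - b) (fun b => m + 1 - b) ?_ ?_ ?_ ?_ (fun _ _ => rfl) <;>
    intro b hb <;> simp only [mem_Icc] at hb ⊢ <;> omega

-- Partial fractions: `1 / (b (m + 1 - b)) = (1 / b + 1 / (m + 1 - b)) / (m + 1)`.
lemma sum_one_div_mul_reflect (m : ℕ) :
    ∑ b ∈ Icc 1 m, (1 : ℝ) / (b * ((m + 1 - b : ℕ) : ℝ)) = 2 * A m / (m + 1) := by
  have hsplit : ∀ b ∈ Icc 1 m, (1 : ℝ) / (b * ((m + 1 - b : ℕ) : ℝ)) =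
      (1 / (b : ℝ) + 1 / ((m + 1 - b : ℕ) : ℝ)) / (m + 1) := by
    intro b hb
    rw [mem_Icc] at hb
    have hb0 : (b : ℝ) ≠ 0 := Nat.cast_ne_zero.mpr (by omega)
    have hc0 : ((m + 1 - b : ℕ) : ℝ) ≠ 0 := Nat.cast_ne_zero.mpr (by omega)
    have hsum : (b : ℝ) + ((m + 1 - b : ℕ) : ℝ) = m + 1 := by
      rw [Nat.cast_sub (by omega)]; push_cast; ring
    field_simp
    linarith
  rw [sum_congr rfl hsplit, ← sum_div, sum_add_distrib, sum_Icc_one_inv_reflect, ← A]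
  ring

noncomputable def triangleSum (m : ℕ) (w : ℕ → ℝ) : ℝ :=
  ∑ b ∈ Icc 1 m, ∑ c ∈ Icc 1 (m - b), w (m - b - c) / ((b : ℝ) * c)

lemma triangleSum_succ (m : ℕ) (w : ℕ → ℝ) :
    triangleSum (m + 1) w = triangleSum m (fun k => w (k + 1)) +
      w 0 * ∑ b ∈ Icc 1 m, (1 : ℝ) / (b * ((m + 1 - b : ℕ) : ℝ)) := by
  rw [triangleSum, sum_Icc_succ_top (by omega), Nat.sub_self, Icc_eq_empty_of_lt zero_lt_one,
    sum_empty, add_zero, mul_sum, triangleSum, ← sum_add_distrib]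
  refine sum_congr rfl fun b hb => ?_
  rw [mem_Icc] at hb
  rw [show m + 1 - b = m - b + 1 by omega, sum_Icc_succ_top (by omega), Nat.sub_self,
    mul_one_div]
  congr 1
  refine sum_congr rfl fun c hc => ?_
  rw [mem_Icc] at hc
  rw [show m - b + 1 - c = m - b - c + 1 by omega]

lemma triangleSum_add (m : ℕ) (u v : ℕ → ℝ) :
    triangleSum m (fun k => u k + v k) = triangleSum m u + triangleSum m v := by
  simp only [triangleSum, add_div, sum_add_distrib]

lemma triangleSum_const_mul (m : ℕ) (a : ℝ) (u : ℕ → ℝ) :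
    triangleSum m (fun k => a * u k) = a * triangleSum m u := by
  simp only [triangleSum, mul_div_assoc, mul_sum]

lemma triangleSum_one (m : ℕ) : triangleSum m (fun _ => 1) = A m ^ 2 - B m := by
  induction m with
  | zero => simp [triangleSum, A, B]
  | succ m ih =>
    rw [triangleSum_succ, ih, sum_one_div_mul_reflect, A_succ, B_succ]
    field_simp
    ring

lemma triangleSum_natCast (m : ℕ) :
    triangleSum m (fun k => (k : ℝ)) = m * (A m ^ 2 - B m) - 2 * m * A m + 2 * m := by
  induction m with
  | zero => simp [triangleSum]
  | succ m ih =>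
    rw [triangleSum_succ]
    simp only [Nat.cast_add, Nat.cast_one, Nat.cast_zero, zero_mul, add_zero, triangleSum_add,
      ih, triangleSum_one, A_succ, B_succ]
    field_simp
    ring

lemma triangleSum_natCast_sq (m : ℕ) :
    triangleSum m (fun k => (k : ℝ) ^ 2) = m ^ 2 * (A m ^ 2 - B m) - 4 * m ^ 2 * A m +
      4 * m ^ 2 + m * (m + 1) * A m - m * (m - 1) / 2 - 2 * m := by
  induction m with
  | zero => simp [triangleSum]
  | succ m ih =>
    rw [triangleSum_succ]
    simp only [Nat.cast_add, Nat.cast_one, Nat.cast_zero, add_sq, mul_one, one_pow,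
      triangleSum_add, triangleSum_const_mul, ih, triangleSum_natCast, triangleSum_one, A_succ,
      B_succ]
    field_simp
    ring

lemma sum_triangleSum_natCast_sq_div (n : ℕ) :
    ∑ m ∈ Icc 1 n, triangleSum m (fun k => (k : ℝ) ^ 2) / m =
      11 / 4 * n ^ 2 - B n / 2 * n ^ 2 - 7 / 4 * n - B n / 2 * n + A n +
        n * (n + 1) / 2 * A n ^ 2 - 2 * n ^ 2 * A n := by
  induction n with
  | zero => simp [A, B]
  | succ n ih =>
    rw [sum_Icc_succ_top (by omega), ih, triangleSum_natCast_sq]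
    push_cast
    rw [A_succ, B_succ]
    field_simp
    ring

lemma sum_Icc_sum_Icc_eq_sum_triangle {M : Type*} [AddCommMonoid M] {m n : ℕ} (hmn : m ≤ n)
    (f : ℕ → ℕ → M) (hf : ∀ b c, m < b + c → f b c = 0) :
    ∑ b ∈ Icc 1 n, ∑ c ∈ Icc 1 n, f b c = ∑ b ∈ Icc 1 m, ∑ c ∈ Icc 1 (m - b), f b c := by
  symm
  refine sum_subset_zero_on_sdiff (Icc_subset_Icc_right hmn) ?_ fun b hb => ?_
  · intro b hb
    rw [mem_sdiff, mem_Icc, mem_Icc] at hb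
    exact sum_eq_zero fun c hc => hf b c (by rw [mem_Icc] at hc; omega)
  · rw [mem_Icc] at hb
    refine sum_subset_zero_on_sdiff (Icc_subset_Icc_right (by omega)) ?_ fun _ _ => rfl
    intro c hc
    rw [mem_sdiff, mem_Icc, mem_Icc] at hc
    exact hf b c (by omega)

lemma sum_Icc_sum_Icc_max_sq_div {m n : ℕ} (hmn : m ≤ n) :
    ∑ b ∈ Icc 1 n, ∑ c ∈ Icc 1 n, max ((m : ℝ) - b - c) 0 ^ 2 / ((b : ℝ) * c) =
      triangleSum m (fun k => (k : ℝ) ^ 2) := by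
  rw [sum_Icc_sum_Icc_eq_sum_triangle hmn, triangleSum]
  · refine sum_congr rfl fun b hb => sum_congr rfl fun c hc => ?_
    rw [mem_Icc] at hb hc
    rw [max_eq_left (by rw [sub_sub, sub_nonneg]; exact_mod_cast (by omega : b + c ≤ m)),
      Nat.cast_sub (by omega), Nat.cast_sub (by omega)]
  · intro b c hbc
    rw [max_eq_right (by rw [sub_sub, sub_nonpos]; exact_mod_cast hbc.le)]
    simp

lemma sum_sum_sum_mul_mul {ι R : Type*} [CommSemiring R] (s : Finset ι) (f g h : ι → R) :
    ∑ x ∈ s, ∑ y ∈ s, ∑ z ∈ s, f x * g y * h z =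
      (∑ x ∈ s, f x) * (∑ y ∈ s, g y) * ∑ z ∈ s, h z := by
  rw [sum_mul_sum, sum_mul]
  simp_rw [sum_mul, mul_sum]

lemma mul_abs_self_eq (t : ℝ) : t * |t| = 2 * max t 0 ^ 2 - t ^ 2 := by
  rcases le_total 0 t with ht | ht
  · rw [abs_of_nonneg ht, max_eq_left ht]; ring
  · rw [abs_of_nonpos ht, max_eq_right ht]; ring

lemma sum_cube_sq_sub_three_mul_sq_div (n : ℕ) :
    ∑ x₁ ∈ Icc 1 n, ∑ x₂ ∈ Icc 1 n, ∑ x₃ ∈ Icc 1 n,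
      (((x₁ : ℝ) + x₂ + x₃) ^ 2 - 3 * ((x₁ : ℝ) - x₂ - x₃) ^ 2) / ((x₁ : ℝ) * x₂ * x₃) =
      12 * n ^ 2 * A n - 3 * n * (n + 1) * A n ^ 2 := by
  have hsplit : ∀ x₁ ∈ Icc 1 n, ∀ x₂ ∈ Icc 1 n, ∀ x₃ ∈ Icc 1 n,
      (((x₁ : ℝ) + x₂ + x₃) ^ 2 - 3 * ((x₁ : ℝ) - x₂ - x₃) ^ 2) / ((x₁ : ℝ) * x₂ * x₃) =
        -2 * (x₁ : ℝ) * (1 / x₂) * (1 / x₃) + 1 / (x₁ : ℝ) * (-2 * x₂) * (1 / x₃) +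
          1 / (x₁ : ℝ) * (1 / x₂) * (-2 * x₃) + 1 * 1 * (8 * (1 / (x₃ : ℝ))) +
          1 * (8 * (1 / (x₂ : ℝ))) * 1 + -4 * (1 / (x₁ : ℝ)) * 1 * 1 := by
    intro x₁ h₁ x₂ h₂ x₃ h₃
    rw [mem_Icc] at h₁ h₂ h₃
    have : (x₁ : ℝ) ≠ 0 := Nat.cast_ne_zero.mpr (by omega)
    have : (x₂ : ℝ) ≠ 0 := Nat.cast_ne_zero.mpr (by omega)
    have : (x₃ : ℝ) ≠ 0 := Nat.cast_ne_zero.mpr (by omega)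
    field_simp
    ring
  rw [sum_congr rfl fun x₁ h₁ => sum_congr rfl fun x₂ h₂ => sum_congr rfl fun x₃ h₃ =>
    hsplit x₁ h₁ x₂ h₂ x₃ h₃]
  simp only [sum_add_distrib, sum_sum_sum_mul_mul]
  simp only [← mul_sum, ← A.eq_1, sum_Icc_one_natCast, sum_const, Nat.card_Icc,
    add_tsub_cancel_right, nsmul_eq_mul, mul_one]
  ring

theorem stmt11_general (n : ℕ) : S n = F n := by
  have hsplit : ∀ x₁ x₂ x₃ : ℕ,
      (((x₁ : ℝ) + x₂ + x₃) ^ 2 + 3 * ((x₁ : ℝ) - x₂ - x₃) * |(x₁ : ℝ) - x₂ - x₃|) /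
        ((x₁ : ℝ) * x₂ * x₃) =
      (((x₁ : ℝ) + x₂ + x₃) ^ 2 - 3 * ((x₁ : ℝ) - x₂ - x₃) ^ 2) / ((x₁ : ℝ) * x₂ * x₃) +
        6 * (max ((x₁ : ℝ) - x₂ - x₃) 0 ^ 2 / ((x₂ : ℝ) * x₃) / x₁) := by
    intro x₁ x₂ x₃
    rw [mul_assoc 3, mul_abs_self_eq]
    ring
  have htriangle : ∀ m ∈ Icc 1 n,
      ∑ x₂ ∈ Icc 1 n, ∑ x₃ ∈ Icc 1 n, max ((m : ℝ) - x₂ - x₃) 0 ^ 2 / ((x₂ : ℝ) * x₃) =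
        triangleSum m (fun k => (k : ℝ) ^ 2) :=
    fun m hm => sum_Icc_sum_Icc_max_sq_div (mem_Icc.mp hm).2
  simp only [S, hsplit, sum_add_distrib, ← mul_sum, ← sum_div]
  rw [sum_cube_sq_sub_three_mul_sq_div, sum_congr rfl fun m hm => by rw [htriangle m hm],
    sum_triangleSum_natCast_sq_div, F]
  ring

theorem stmt11 (n : ℕ) (hn : 1 ≤ n) : S n = F n :=
  stmt11_general n
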